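/- arXiv:1604.08489 — 2 statements merged into one kernel-verified Lean document; each statement's English description precedes it below -/
import Mathlib

section
/- Let V be a vector space over a field, let b and n be subspaces of V, let a' be a subspace of V contained in n, and set b' := b ∩ n. Then the following two conditions are equivalent: (i) b + n = V and a' + b' = n; (ii) a' + b = V. -/
/-- Linear-algebra form of the transversality lemma: for subspaces `b, n` of `V`,
`a' ≤ n` and `b' = b ⊓ n`, one has `(b + n = V and a' + b' = n) ↔ (a' + b = V)`. -/
theorem stmt_5 {K V : Type*} [Field K] [AddCommGroup V] [Module K V]
    (b n a' : Submodule K V) (ha'n : a' ≤ n) (b' : Submodule K V) (hb' : b' = b ⊓ n) :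
    (b ⊔ n = ⊤ ∧ a' ⊔ b' = n) ↔ a' ⊔ b = ⊤ := by
  subst hb'
  constructor
  · rintro ⟨h1, h2⟩
    rw [eq_top_iff, ← h1, sup_comm b n, ← h2]
    exact sup_le (sup_le le_sup_left (le_trans inf_le_left le_sup_right)) le_sup_right
  · intro h
    constructor
    · rw [eq_top_iff, ← h]
      exact sup_le (le_trans ha'n le_sup_right) le_sup_left
    · rw [← sup_inf_assoc_of_le b ha'n, h, top_inf_eq]
end

section
/- Let 1 < n, let f : ℝ^m → ℝ^n be differentiable at a point x, and fix i ∈ {1,…,n}. Then the total derivative Df(x) : ℝ^m → ℝ^n is surjective if and only if D f_i(x) is surjective, D f_i^*(x) is surjective, and ker(D f_i(x)) + ker(D f_i^*(x)) = ℝ^m. Equivalently: x is a critical point of f if and only if x is a critical point of f_i, or x is a critical point of f_i^*, or x is a regular point of both f_i and f_i^* at which the level set f_i⁻¹(f_i(x)) does not intersect (f_i^*)⁻¹(f_i^*(x)) transversally (i.e. ker(D f_i(x)) + ker(D f_i^*(x)) ≠ ℝ^m). -/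
open Metric Set

/-- The projection `ℝⁿ → ℝⁿ⁻¹` deleting the `i`-th coordinate. -/
noncomputable def projDel {n : ℕ} (i : Fin n)
    (t : EuclideanSpace ℝ (Fin n)) : EuclideanSpace ℝ (Fin (n - 1)) :=
  WithLp.toLp 2 fun j => t (Fin.cast (Nat.succ_pred_eq_of_pos i.pos)
    ((Fin.cast (Nat.succ_pred_eq_of_pos i.pos).symm i).succAbove j))

/-- The restriction `g| : A → B` is a smooth locally trivial fibration: every `b ∈ B` has a
relatively open neighborhood `U` in `B` over which `g` trivializes, via a bijection
`φ : A ∩ g⁻¹(U) → U × F` whose first component is `g`, with `φ` smooth on `A ∩ g⁻¹(U)`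
and its inverse `ψ` smooth on `U × F` (smoothness in the sense of `ContDiffOn`). -/
def SmoothLocTrivFib {E F : Type*} [NormedAddCommGroup E] [NormedSpace ℝ E]
    [NormedAddCommGroup F] [NormedSpace ℝ F]
    (g : E → F) (A : Set E) (B : Set F) : Prop :=
  ∀ b ∈ B, ∃ (U : Set F) (Fib : Set E) (φ : E → F × E) (ψ : F × E → E),
    b ∈ U ∧ U ⊆ B ∧ (∃ V : Set F, IsOpen V ∧ U = V ∩ B) ∧
    Set.BijOn φ (A ∩ g ⁻¹' U) (U ×ˢ Fib) ∧
    (∀ x ∈ A ∩ g ⁻¹' U, (φ x).1 = g x) ∧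
    ContDiffOn ℝ (⊤ : ℕ∞) φ (A ∩ g ⁻¹' U) ∧
    ContDiffOn ℝ (⊤ : ℕ∞) ψ (U ×ˢ Fib) ∧
    (∀ x ∈ A ∩ g ⁻¹' U, ψ (φ x) = x) ∧
    (∀ y ∈ U ×ˢ Fib, φ (ψ y) = y)

/-- `f` has an isolated critical value at `0 ∈ ℝⁿ`. -/
def HasIsolatedCriticalValueAtZero {m n : ℕ}
    (f : EuclideanSpace ℝ (Fin m) → EuclideanSpace ℝ (Fin n)) : Prop :=
  ∃ ε > (0:ℝ), ∃ η₀ > (0:ℝ), ∀ x ∈ ball (0 : EuclideanSpace ℝ (Fin m)) ε,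
    f x ∈ ball (0 : EuclideanSpace ℝ (Fin n)) η₀ \ {0} →
    Function.Surjective (fderiv ℝ f x)


/-- `projDel i` as a linear map. -/
noncomputable def projDelL {n : ℕ} (i : Fin n) :
    EuclideanSpace ℝ (Fin n) →ₗ[ℝ] EuclideanSpace ℝ (Fin (n - 1)) where
  toFun := projDel i
  map_add' := fun _ _ => rfl
  map_smul' := fun _ _ => rfl

/-- `projDel i` as a continuous linear map. -/
noncomputable def projDelCLM {n : ℕ} (i : Fin n) :
    EuclideanSpace ℝ (Fin n) →L[ℝ] EuclideanSpace ℝ (Fin (n - 1)) :=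
  LinearMap.toContinuousLinearMap (projDelL i)

lemma key {E F₁ F₂ : Type*} [NormedAddCommGroup E] [NormedSpace ℝ E]
    [NormedAddCommGroup F₁] [NormedSpace ℝ F₁]
    [NormedAddCommGroup F₂] [NormedSpace ℝ F₂]
    (S : E →L[ℝ] F₁) (R : E →L[ℝ] F₂) :
    (Function.Surjective fun z => (S z, R z)) ↔
      Function.Surjective S ∧ Function.Surjective R ∧
        LinearMap.ker (S : E →ₗ[ℝ] F₁) ⊔ LinearMap.ker (R : E →ₗ[ℝ] F₂) = ⊤ := by
  constructor
  · intro h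
    refine ⟨fun y₁ => ?_, fun y₂ => ?_, ?_⟩
    · obtain ⟨z, hz⟩ := h (y₁, 0); exact ⟨z, congrArg Prod.fst hz⟩
    · obtain ⟨z, hz⟩ := h (0, y₂); exact ⟨z, congrArg Prod.snd hz⟩
    · rw [eq_top_iff]
      intro e _
      obtain ⟨u, hu⟩ := h (0, R e)
      have hu1 : S u = 0 := congrArg Prod.fst hu
      have hu2 : R u = R e := congrArg Prod.snd hu
      refine Submodule.mem_sup.2 ⟨u, LinearMap.mem_ker.2 hu1, e - u,
        LinearMap.mem_ker.2 (by simp [map_sub, hu2]), by abel⟩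
  · rintro ⟨hS, hR, hker⟩ ⟨y₁, y₂⟩
    obtain ⟨a, ha⟩ := hS y₁
    obtain ⟨b, hb⟩ := hR y₂
    have hmem : ∀ e : E, ∃ u ∈ LinearMap.ker (S : E →ₗ[ℝ] F₁), ∃ v ∈ LinearMap.ker (R : E →ₗ[ℝ] F₂), u + v = e := by
      intro e
      have : e ∈ LinearMap.ker (S : E →ₗ[ℝ] F₁) ⊔ LinearMap.ker (R : E →ₗ[ℝ] F₂) := hker ▸ Submodule.mem_top
      obtain ⟨u, hu, v, hv, huv⟩ := Submodule.mem_sup.1 this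
      exact ⟨u, hu, v, hv, huv⟩
    obtain ⟨u, hu, v, hv, huv⟩ := hmem a
    obtain ⟨u', hu', v', hv', huv'⟩ := hmem b
    refine ⟨v + u', ?_⟩
    have h1 : S v = y₁ := by
      have := congrArg S huv
      rw [map_add] at this
      rw [show S u = 0 from LinearMap.mem_ker.1 hu, zero_add] at this
      rw [this, ha]
    have h2 : R u' = y₂ := by
      have := congrArg R huv'
      rw [map_add] at this
      rw [show R v' = 0 from LinearMap.mem_ker.1 hv', add_zero] at this
      rw [this, hb]
    have h3 : S u' = 0 := LinearMap.mem_ker.1 hu'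
    have h4 : R v = 0 := LinearMap.mem_ker.1 hv
    simp [map_add, h1, h2, h3, h4, Prod.ext_iff]

lemma eL_inj {n : ℕ} (i : Fin n) :
    Function.Injective fun t : EuclideanSpace ℝ (Fin n) => (t i, projDel i t) := by
  have h := Nat.succ_pred_eq_of_pos i.pos
  intro s t hst
  have h1 : s i = t i := congrArg Prod.fst hst
  have h2 : ∀ j, projDel i s j = projDel i t j := fun j =>
    congrArg (fun p => p.2 j) hst
  ext k
  by_cases hk : k = i
  · rw [hk]; exact h1
  · have hk' : Fin.cast h.symm k ≠ Fin.cast h.symm i := by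
      intro hc
      exact hk (by simpa using congrArg (Fin.cast h) hc)
    obtain ⟨j, hj⟩ := Fin.exists_succAbove_eq hk'
    have := h2 j
    unfold projDel at this
    change s (Fin.cast _ ((Fin.cast _ i).succAbove j)) = t (Fin.cast _ ((Fin.cast _ i).succAbove j)) at this
    rw [hj] at this
    simpa using this

/-- Remark: `Df(x)` is surjective iff `Dfᵢ(x)` and `Dfᵢ*(x)` are surjective and their kernels
sum to `ℝᵐ`; equivalently, `x` is a critical point of `f` iff it is a critical point of `fᵢ`,
or of `fᵢ*`, or a regular point of both at which the level sets are not transverse. -/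
theorem stmt_7 {m n : ℕ} (hn : 1 < n)
    (f : EuclideanSpace ℝ (Fin m) → EuclideanSpace ℝ (Fin n))
    (x : EuclideanSpace ℝ (Fin m))
    (hdiff : DifferentiableAt ℝ f x)
    (i : Fin n) :
    (Function.Surjective (fderiv ℝ f x) ↔
      (Function.Surjective (fderiv ℝ (fun y => f y i) x) ∧
       Function.Surjective (fderiv ℝ (projDel i ∘ f) x) ∧
       LinearMap.ker (fderiv ℝ (fun y => f y i) x : EuclideanSpace ℝ (Fin m) →ₗ[ℝ] ℝ) ⊔
         LinearMap.ker (fderiv ℝ (projDel i ∘ f) x : EuclideanSpace ℝ (Fin m) →ₗ[ℝ] EuclideanSpace ℝ (Fin (n - 1))) = ⊤))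
    ∧
    (¬ Function.Surjective (fderiv ℝ f x) ↔
      (¬ Function.Surjective (fderiv ℝ (fun y => f y i) x) ∨
       ¬ Function.Surjective (fderiv ℝ (projDel i ∘ f) x) ∨
       (Function.Surjective (fderiv ℝ (fun y => f y i) x) ∧
        Function.Surjective (fderiv ℝ (projDel i ∘ f) x) ∧
        LinearMap.ker (fderiv ℝ (fun y => f y i) x : EuclideanSpace ℝ (Fin m) →ₗ[ℝ] ℝ) ⊔
          LinearMap.ker (fderiv ℝ (projDel i ∘ f) x : EuclideanSpace ℝ (Fin m) →ₗ[ℝ] EuclideanSpace ℝ (Fin (n - 1))) ≠ ⊤))) := by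
  set T := fderiv ℝ f x with hT
  set P : EuclideanSpace ℝ (Fin n) →L[ℝ] ℝ := EuclideanSpace.proj i with hP
  set Q := projDelCLM i with hQ
  have hA : fderiv ℝ (fun y => f y i) x = P.comp T :=
    (P.hasFDerivAt.comp x hdiff.hasFDerivAt).fderiv
  have hB : fderiv ℝ (projDel i ∘ f) x = Q.comp T :=
    (Q.hasFDerivAt.comp x hdiff.hasFDerivAt).fderiv
  have hinj : Function.Injective
      fun t : EuclideanSpace ℝ (Fin n) => (P t, Q t) := eL_inj i
  have hsurj : Function.Surjective
      fun t : EuclideanSpace ℝ (Fin n) => (P t, Q t) := by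
    have hfr : Module.finrank ℝ (EuclideanSpace ℝ (Fin n)) =
        Module.finrank ℝ (ℝ × EuclideanSpace ℝ (Fin (n - 1))) := by
      simp [Module.finrank_prod, finrank_euclideanSpace_fin]
      omega
    exact ((P.prod Q).toLinearMap.injective_iff_surjective_of_finrank_eq_finrank hfr).1 hinj
  have main : Function.Surjective T ↔
      Function.Surjective (P.comp T) ∧ Function.Surjective (Q.comp T) ∧
        LinearMap.ker (P.comp T : EuclideanSpace ℝ (Fin m) →ₗ[ℝ] ℝ) ⊔
          LinearMap.ker (Q.comp T : EuclideanSpace ℝ (Fin m) →ₗ[ℝ] EuclideanSpace ℝ (Fin (n - 1))) = ⊤ := by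
    rw [← key]
    constructor
    · intro h y
      obtain ⟨t, ht⟩ := hsurj y
      obtain ⟨z, hz⟩ := h t
      exact ⟨z, by simp [ContinuousLinearMap.comp_apply, hz, ht]⟩
    · intro h y
      obtain ⟨z, hz⟩ := h (P y, Q y)
      exact ⟨z, hinj (by simpa [ContinuousLinearMap.comp_apply] using hz)⟩
  rw [hA, hB]
  refine ⟨main, ?_⟩
  rw [main]
  tauto
end
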